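/- The first primary Cartan invariant I₀ of the model M_LC vanishes identically: on Ω = {z₂ζ₂ ≠ 1}, the function I₀ := −(1/3)·𝒦(ℒ̄₁(ℒ̄₁(k)))/ℒ̄₁(k)² + (1/3)·𝒦(ℒ̄₁(k))·ℒ̄₁(ℒ̄₁(k))/ℒ̄₁(k)³ + (2/3)·ℒ₁(ℒ₁(k̄))/ℒ₁(k̄) + (2/3)·ℒ₁(ℒ̄₁(k))/ℒ̄₁(k) is identically zero. -/
import Mathlib


open Complex

noncomputable section

/-- Partial derivative with respect to `z₁`, the first coordinate of `(z₁, z₂, ζ₁, ζ₂) ∈ ℂ⁴`. -/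
def pz1 (G : ℂ × ℂ × ℂ × ℂ → ℂ) (q : ℂ × ℂ × ℂ × ℂ) : ℂ :=
  deriv (fun s => G (s, q.2.1, q.2.2.1, q.2.2.2)) q.1

/-- Partial derivative with respect to `z₂`. -/
def pz2 (G : ℂ × ℂ × ℂ × ℂ → ℂ) (q : ℂ × ℂ × ℂ × ℂ) : ℂ :=
  deriv (fun s => G (q.1, s, q.2.2.1, q.2.2.2)) q.2.1

/-- Partial derivative with respect to `ζ₁`. -/
def pc1 (G : ℂ × ℂ × ℂ × ℂ → ℂ) (q : ℂ × ℂ × ℂ × ℂ) : ℂ :=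
  deriv (fun s => G (q.1, q.2.1, s, q.2.2.2)) q.2.2.1

/-- The slant function of the model: `k = −(ζ₁ + z₁ζ₂)/(1 − z₂ζ₂)`. -/
def kmod : ℂ × ℂ × ℂ × ℂ → ℂ := fun q =>
  -((q.2.2.1 + q.1 * q.2.2.2) / (1 - q.2.1 * q.2.2.2))

/-- The conjugate slant function of the model: `k̄ = −(z₁ + ζ₁z₂)/(1 − z₂ζ₂)`. -/
def kbarmod : ℂ × ℂ × ℂ × ℂ → ℂ := fun q =>
  -((q.1 + q.2.2.1 * q.2.1) / (1 - q.2.1 * q.2.2.2))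

/-- The derivation `𝒦 = k ∂_{z₁} + ∂_{z₂}` acting on functions of `(z₁, z₂, ζ₁, ζ₂)`. -/
def Kder (G : ℂ × ℂ × ℂ × ℂ → ℂ) (q : ℂ × ℂ × ℂ × ℂ) : ℂ :=
  kmod q * pz1 G q + pz2 G q

/-- The first primary Cartan invariant `I₀` of the model `M_LC`, with `ℒ₁ = ∂_{z₁}`,
`ℒ̄₁ = ∂_{ζ₁}` and `𝒦 = k ∂_{z₁} + ∂_{z₂}`. -/
def I0mod : ℂ × ℂ × ℂ × ℂ → ℂ := fun q =>
  -(1 / 3) * Kder (pc1 (pc1 kmod)) q / (pc1 kmod q) ^ 2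
    + (1 / 3) * Kder (pc1 kmod) q * pc1 (pc1 kmod) q / (pc1 kmod q) ^ 3
    + (2 / 3) * pz1 (pz1 kbarmod) q / pz1 kbarmod q
    + (2 / 3) * pz1 (pc1 kmod) q / pc1 kmod q

/-- Auxiliary: derivative of an affine expression written with division. This holds
even when `c = 0`, since division by zero is zero in Lean. -/
lemma deriv_affine_div (a b c : ℂ) : deriv (fun s : ℂ => -((s + a) / c)) b = -(1 / c) := by
  have h : (fun s : ℂ => -((s + a) / c)) = fun s => (-(1/c)) * s + (-(a/c)) := by
    funext s; ring
  rw [h]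
  simpa using (((hasDerivAt_id b).const_mul (-(1/c))).add_const (-(a/c))).deriv

lemma pc1_kmod (q : ℂ × ℂ × ℂ × ℂ) :
    pc1 kmod q = -(1 / (1 - q.2.1 * q.2.2.2)) := by
  show deriv (fun s => kmod (q.1, q.2.1, s, q.2.2.2)) q.2.2.1 = _
  have h : (fun s => kmod (q.1, q.2.1, s, q.2.2.2))
      = fun s => -((s + q.1 * q.2.2.2) / (1 - q.2.1 * q.2.2.2)) := rfl
  rw [h, deriv_affine_div]

lemma pz1_kbarmod (q : ℂ × ℂ × ℂ × ℂ) :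
    pz1 kbarmod q = -(1 / (1 - q.2.1 * q.2.2.2)) := by
  show deriv (fun s => kbarmod (s, q.2.1, q.2.2.1, q.2.2.2)) q.1 = _
  have h : (fun s => kbarmod (s, q.2.1, q.2.2.1, q.2.2.2))
      = fun s => -((s + q.2.2.1 * q.2.1) / (1 - q.2.1 * q.2.2.2)) := rfl
  rw [h, deriv_affine_div]

lemma pc1_pc1_kmod (q : ℂ × ℂ × ℂ × ℂ) : pc1 (pc1 kmod) q = 0 := by
  show deriv (fun s => pc1 kmod (q.1, q.2.1, s, q.2.2.2)) q.2.2.1 = 0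
  have h : (fun s => pc1 kmod (q.1, q.2.1, s, q.2.2.2))
      = fun _ => -(1 / (1 - q.2.1 * q.2.2.2)) := funext fun s => pc1_kmod _
  rw [h, deriv_const]

lemma pz1_pc1_kmod (q : ℂ × ℂ × ℂ × ℂ) : pz1 (pc1 kmod) q = 0 := by
  show deriv (fun s => pc1 kmod (s, q.2.1, q.2.2.1, q.2.2.2)) q.1 = 0
  have h : (fun s => pc1 kmod (s, q.2.1, q.2.2.1, q.2.2.2))
      = fun _ => -(1 / (1 - q.2.1 * q.2.2.2)) := funext fun s => pc1_kmod _
  rw [h, deriv_const]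

lemma pz1_pz1_kbarmod (q : ℂ × ℂ × ℂ × ℂ) : pz1 (pz1 kbarmod) q = 0 := by
  show deriv (fun s => pz1 kbarmod (s, q.2.1, q.2.2.1, q.2.2.2)) q.1 = 0
  have h : (fun s => pz1 kbarmod (s, q.2.1, q.2.2.1, q.2.2.2))
      = fun _ => -(1 / (1 - q.2.1 * q.2.2.2)) := funext fun s => pz1_kbarmod _
  rw [h, deriv_const]

lemma pz1_pc1_pc1_kmod (q : ℂ × ℂ × ℂ × ℂ) : pz1 (pc1 (pc1 kmod)) q = 0 := by
  show deriv (fun s => pc1 (pc1 kmod) (s, q.2.1, q.2.2.1, q.2.2.2)) q.1 = 0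
  have h : (fun s => pc1 (pc1 kmod) (s, q.2.1, q.2.2.1, q.2.2.2))
      = fun _ => (0 : ℂ) := funext fun s => pc1_pc1_kmod _
  rw [h, deriv_const]

lemma pz2_pc1_pc1_kmod (q : ℂ × ℂ × ℂ × ℂ) : pz2 (pc1 (pc1 kmod)) q = 0 := by
  show deriv (fun s => pc1 (pc1 kmod) (q.1, s, q.2.2.1, q.2.2.2)) q.2.1 = 0
  have h : (fun s => pc1 (pc1 kmod) (q.1, s, q.2.2.1, q.2.2.2))
      = fun _ => (0 : ℂ) := funext fun s => pc1_pc1_kmod _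
  rw [h, deriv_const]

/-- The first primary Cartan invariant `I₀` of the model `M_LC` vanishes identically
on `Ω = {z₂ζ₂ ≠ 1}`. -/
theorem I0_model_vanishes (q : ℂ × ℂ × ℂ × ℂ) (hq : q.2.1 * q.2.2.2 ≠ 1) :
    I0mod q = 0 := by
  unfold I0mod Kder
  rw [pz1_pc1_pc1_kmod, pz2_pc1_pc1_kmod, pc1_pc1_kmod, pz1_pz1_kbarmod, pz1_pc1_kmod]
  ring
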